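/- A countable family K = (A_i)_{i∈I} of pairwise nonisomorphic structures is E_range-learnable if and only if for all i ≠ j in I there exists s ∈ ℕ such that A_i↾s does not embed into A_j or A_j↾s does not embed into A_i. (This is the paper's characterization of E_range-learnability by Σ^inf_1-partial orders, stated in its equivalent combinatorial form: the Σ^inf_1-theories of A_i and A_j differ exactly when some finite restriction of one fails to embed into the other.) -/

import Mathlib

/-- A structure on domain ℕ: a binary relation given as a map to `Bool`. -/
abbrev Struc := ℕ → ℕ → Bool

/-- The restrictions of `R` and `R'` to `{0,…,s} × {0,…,s}` agree. -/
def restrEq (R R' : Struc) (s : ℕ) : Prop :=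
  ∀ x ≤ s, ∀ y ≤ s, R x y = R' x y

/-- `R` and `R'` are isomorphic structures. -/
def Isom (R R' : Struc) : Prop :=
  ∃ e : ℕ ≃ ℕ, ∀ x y, R' (e x) (e y) = R x y

/-- `R↾s` embeds into `R'`: there is a map injective on `{0,…,s}` preserving the relation. -/
def EmbedsRestr (R : Struc) (s : ℕ) (R' : Struc) : Prop :=
  ∃ h : ℕ → ℕ, (∀ x ≤ s, ∀ y ≤ s, h x = h y → x = y) ∧
    (∀ x ≤ s, ∀ y ≤ s, R' (h x) (h y) = R x y)

/-- The learning domain of a family: all isomorphic copies of members of the family. -/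
def LD {I : Type} (A : I → Struc) : Set Struc := {R | ∃ i, Isom R (A i)}

/-- A learner: its conjecture at stage `s` depends only on `R↾s`. -/
def IsLearner {I : Type} (M : Struc → ℕ → Option I) : Prop :=
  ∀ R R' s, restrEq R R' s → M R s = M R' s

/-- `M` Ex-learns the family `A`. -/
def ExLearns {I : Type} (A : I → Struc) (M : Struc → ℕ → Option I) : Prop :=
  ∀ R i, Isom R (A i) → ∃ s₀, ∀ s ≥ s₀, M R s = some i

/-- `M` Fin-learns the family `A`. -/
def FinLearns {I : Type} (A : I → Struc) (M : Struc → ℕ → Option I) : Prop :=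
  ∀ R i, Isom R (A i) →
    ∃ s₀, (∀ s < s₀, M R s = none) ∧ (∀ s ≥ s₀, M R s = some i)

/-- `M` co-learns the family `A`. -/
def CoLearns {I : Type} (A : I → Struc) (M : Struc → ℕ → Option I) : Prop :=
  ∀ R i, Isom R (A i) → ∀ j, (∃ s, M R s = some j) ↔ j ≠ i

/-- `M` nUs-learns the family `A`: it Ex-learns it and never abandons the correct conjecture. -/
def NUsLearns {I : Type} (A : I → Struc) (M : Struc → ℕ → Option I) : Prop :=
  ExLearns A M ∧
    ∀ R i, Isom R (A i) → ∀ s, M R s = some i → ∀ t ≥ s, M R t = some i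

/-- `M` Dec-learns the family `A`: it Ex-learns it and never repeats an abandoned conjecture. -/
def DecLearns {I : Type} (A : I → Struc) (M : Struc → ℕ → Option I) : Prop :=
  ExLearns A M ∧
    ∀ R ∈ LD A, ∀ (j : I) (s : ℕ), M R s = some j → M R (s + 1) ≠ some j →
      ∀ t > s, M R t ≠ some j

/-- `M` PL-learns the family `A`: the unique conjecture output infinitely often is correct. -/
def PLLearns {I : Type} (A : I → Struc) (M : Struc → ℕ → Option I) : Prop :=
  ∀ R ∈ LD A, ∀ i, {s | M R s = some i}.Infinite ↔ Isom R (A i)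

/-- The relation `E₀` on Baire space: eventual agreement. -/
def E0 (p q : ℕ → ℕ) : Prop := ∃ m, ∀ n ≥ m, p n = q n

/-- The relation `E₃` on `ℕ → (ℕ → ℕ)`: columnwise `E₀`. -/
def E3 (p q : ℕ → ℕ → ℕ) : Prop := ∀ m, E0 (p m) (q m)

/-- The relation `E_range` on Baire space: equality of ranges. -/
def Erange (p q : ℕ → ℕ) : Prop := Set.range p = Set.range q

/-!
If `A i↾s` embeds into `A j` for every `s`, then `A i` is a limit of copies of `A j`, so by
continuity every value of `Γ (A i)` is a value of `Γ` at some copy of `A j`, i.e. of `Γ (A j)`.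
Mutual embeddability of all finite restrictions therefore forces equal ranges, hence isomorphism.

Conversely, let `Γ R` enumerate the codes of all pairs `(i, s)` such that `A i↾s` embeds into `R`.
Each code is certified by a finite part of `R`, which makes `Γ` continuous. Isomorphic structures
have the same codes, and if `R ≅ A i` and `R' ≅ A j` have the same codes, then every `A i↾s`
embeds into `A j` and vice versa, which the separation hypothesis excludes unless `i = j`.
-/

open Set Filter Topology

theorem Isom.refl (R : Struc) : Isom R R := ⟨Equiv.refl ℕ, fun _ _ => rfl⟩

theorem Isom.symm {R R' : Struc} (h : Isom R R') : Isom R' R := by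
  obtain ⟨e, he⟩ := h
  exact ⟨e.symm, fun x y => by simpa using (he (e.symm x) (e.symm y)).symm⟩

theorem Isom.trans {R R' R'' : Struc} (h : Isom R R') (h' : Isom R' R'') : Isom R R'' := by
  obtain ⟨e, he⟩ := h
  obtain ⟨e', he'⟩ := h'
  exact ⟨e.trans e', fun x y => by simp [he, he']⟩

theorem restrEq.symm {R R' : Struc} {t : ℕ} (h : restrEq R R' t) : restrEq R' R t :=
  fun x hx y hy => (h x hx y hy).symm

theorem embedsRestr_self (D : Struc) (s : ℕ) : EmbedsRestr D s D :=
  ⟨id, fun _ _ _ _ => id, fun _ _ _ _ => rfl⟩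

theorem EmbedsRestr.of_isom {D R R' : Struc} {s : ℕ} (hE : EmbedsRestr D s R)
    (hI : Isom R R') : EmbedsRestr D s R' := by
  obtain ⟨h, hinj, hval⟩ := hE
  obtain ⟨e, he⟩ := hI
  exact ⟨e ∘ h, fun x hx y hy hxy => hinj x hx y hy (e.injective hxy),
    fun x hx y hy => by simp only [Function.comp_apply, he, hval x hx y hy]⟩

theorem Isom.embedsRestr_iff {R R' : Struc} (hI : Isom R R') (D : Struc) (s : ℕ) :
    EmbedsRestr D s R ↔ EmbedsRestr D s R' :=
  ⟨fun h => h.of_isom hI, fun h => h.of_isom hI.symm⟩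

/-- Extending the embedding of `D↾s` to a permutation `π` of `ℕ` and pulling `R` back along `π`
gives a copy of `R` that agrees with `D` on `{0,…,s}`. -/
theorem EmbedsRestr.exists_isom_restrEq {D R : Struc} {s : ℕ} (hE : EmbedsRestr D s R) :
    ∃ R', Isom R' R ∧ restrEq D R' s := by
  obtain ⟨h, hinj, hval⟩ := hE
  let h' : Iic s ↪ ℕ := ⟨fun x => h x, fun x y hxy => Subtype.ext (hinj x x.2 y y.2 hxy)⟩
  have hfin : Cardinal.mk (Iic s) < Cardinal.mk ℕ := by
    rw [Cardinal.mk_nat, Cardinal.lt_aleph0_iff_set_finite]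
    exact finite_Iic s
  obtain ⟨π, hπ⟩ := Cardinal.extend_function_of_lt h' hfin ⟨Equiv.refl ℕ⟩
  refine ⟨fun x y => R (π x) (π y), ⟨π, fun _ _ => rfl⟩, fun x hx y hy => ?_⟩
  have hπ' : ∀ x ≤ s, π x = h x := fun x hx => hπ ⟨x, hx⟩
  show D x y = R (π x) (π y)
  rw [hπ' x hx, hπ' y hy, hval x hx y hy]

theorem tendsto_of_restrEq {D : Struc} {R : ℕ → Struc} (hR : ∀ s, restrEq D (R s) s) :
    Tendsto R atTop (𝓝 D) := by
  refine tendsto_pi_nhds.2 fun x => tendsto_pi_nhds.2 fun y => tendsto_nhds_of_eventually_eq ?_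
  filter_upwards [eventually_ge_atTop (max x y)] with s hs
  exact (hR s x (le_of_max_le_left hs) y (le_of_max_le_right hs)).symm

theorem continuous_of_restrEq {α : Type*} [TopologicalSpace α] [DiscreteTopology α]
    {g : Struc → α} (t : ℕ) (hg : ∀ R R', restrEq R R' t → g R = g R') : Continuous g := by
  let r : Struc → Fin (t + 1) → Fin (t + 1) → Bool := fun R x y => R x y
  have hfac : g.FactorsThrough r := fun R R' hRR' => hg R R' fun x hx y hy =>
    congr_fun₂ hRR' ⟨x, Nat.lt_succ_of_le hx⟩ ⟨y, Nat.lt_succ_of_le hy⟩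
  have hr : Continuous r := by fun_prop
  exact (continuous_of_discreteTopology (f := Function.extend r g fun _ => g default)).comp hr
    |>.congr (hfac.extend_apply _)

/-- Position `0` carries the padding value `0`, so that the range does not depend on whether
some `P k t` fails. -/
noncomputable def natEnum (P : ℕ → ℕ → Prop) : ℕ → ℕ
  | 0 => 0
  | n + 1 => open scoped Classical in if P n.unpair.1 n.unpair.2 then n.unpair.1 + 1 else 0

theorem range_natEnum (P : ℕ → ℕ → Prop) :
    range (natEnum P) = insert 0 (Nat.succ '' {k | ∃ t, P k t}) := by
  classical
  ext m
  constructor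
  · rintro ⟨_ | n, rfl⟩
    · exact mem_insert 0 _
    · by_cases hP : P n.unpair.1 n.unpair.2
      · simp only [natEnum, if_pos hP]
        exact mem_insert_of_mem _ ⟨_, ⟨_, hP⟩, rfl⟩
      · simp only [natEnum, if_neg hP]
        exact mem_insert 0 _
  · rintro (rfl | ⟨k, ⟨t, hP⟩, rfl⟩)
    · exact ⟨0, rfl⟩
    · refine ⟨Nat.pair k t + 1, ?_⟩
      simp only [natEnum, Nat.unpair_pair, if_pos hP, Nat.succ_eq_add_one]

theorem range_natEnum_eq_iff {P Q : ℕ → ℕ → Prop} :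
    range (natEnum P) = range (natEnum Q) ↔ {k | ∃ t, P k t} = {k | ∃ t, Q k t} := by
  rw [range_natEnum, range_natEnum]
  refine ⟨fun h => ?_, fun h => by rw [h]⟩
  ext k
  simpa using congrArg (k + 1 ∈ ·) h

theorem continuous_natEnum {P : ℕ → ℕ → Struc → Prop}
    (hP : ∀ k t R R', restrEq R R' t → (P k t R ↔ P k t R')) :
    Continuous fun R => natEnum fun k t => P k t R := by
  refine continuous_pi fun n => ?_
  rcases n with _ | n
  · exact continuous_const
  · refine continuous_of_restrEq n.unpair.2 fun R R' hRR' => ?_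
    simp only [natEnum]
    congr 1
    exact propext (hP _ _ R R' hRR')

/-- Unlike `EmbedsRestr`, this depends only on `R↾t`. -/
def EmbedsRestrBelow (D : Struc) (s t : ℕ) (R : Struc) : Prop :=
  ∃ h : ℕ → ℕ, (∀ x ≤ s, h x ≤ t) ∧ (∀ x ≤ s, ∀ y ≤ s, h x = h y → x = y) ∧
    (∀ x ≤ s, ∀ y ≤ s, R (h x) (h y) = D x y)

theorem exists_embedsRestrBelow_iff {D R : Struc} {s : ℕ} :
    (∃ t, EmbedsRestrBelow D s t R) ↔ EmbedsRestr D s R := by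
  refine ⟨fun ⟨_, h, _, hinj, hval⟩ => ⟨h, hinj, hval⟩, fun ⟨h, hinj, hval⟩ => ?_⟩
  exact ⟨(Finset.range (s + 1)).sup h, h,
    fun x hx => Finset.le_sup (Finset.mem_range.2 (Nat.lt_succ_of_le hx)), hinj, hval⟩

theorem EmbedsRestrBelow.of_restrEq {D R R' : Struc} {s t : ℕ} (hE : EmbedsRestrBelow D s t R)
    (hRR' : restrEq R R' t) : EmbedsRestrBelow D s t R' := by
  obtain ⟨h, hbd, hinj, hval⟩ := hE
  exact ⟨h, hbd, hinj, fun x hx y hy => by rw [← hRR' _ (hbd x hx) _ (hbd y hy), hval x hx y hy]⟩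

section embedCodes

variable {I : Type} (A : I → Struc) (f : I → ℕ)

/-- Its values are `0` and the codes `Nat.pair (f i) s + 1` of those `A i↾s` that embed into
`R`. -/
noncomputable def embedCodes (R : Struc) : ℕ → ℕ :=
  natEnum fun k t => ∃ i, f i = k.unpair.1 ∧ EmbedsRestrBelow (A i) k.unpair.2 t R

theorem continuous_embedCodes : Continuous (embedCodes A f) :=
  continuous_natEnum fun _ _ _ _ hRR' =>
    ⟨fun ⟨i, hi, hE⟩ => ⟨i, hi, hE.of_restrEq hRR'⟩,
      fun ⟨i, hi, hE⟩ => ⟨i, hi, hE.of_restrEq hRR'.symm⟩⟩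

variable {f}

theorem range_embedCodes_eq_iff (hf : Function.Injective f) {R R' : Struc} :
    range (embedCodes A f R) = range (embedCodes A f R') ↔
      ∀ i s, EmbedsRestr (A i) s R ↔ EmbedsRestr (A i) s R' := by
  have hcodes : ∀ R, {k : ℕ | ∃ t, ∃ i, f i = k.unpair.1 ∧ EmbedsRestrBelow (A i) k.unpair.2 t R} =
      {k : ℕ | ∃ i, f i = k.unpair.1 ∧ EmbedsRestr (A i) k.unpair.2 R} := fun R => by
    ext k
    simp only [mem_ofPred_eq, ← exists_embedsRestrBelow_iff]
    exact exists_comm.trans (exists_congr fun i => exists_and_left)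
  rw [embedCodes, embedCodes, range_natEnum_eq_iff, hcodes, hcodes]
  refine ⟨fun h i s => ?_, fun h => by simp only [h]⟩
  have hk := congrArg (Nat.pair (f i) s ∈ ·) h
  simp only [mem_ofPred_eq, Nat.unpair_pair, hf.eq_iff, exists_eq_left] at hk
  exact Iff.of_eq hk

end embedCodes

theorem range_subset_of_tendsto {ι α β : Type*} [TopologicalSpace α] [DiscreteTopology α]
    {l : Filter ι} [l.NeBot] {p : ι → β → α} {q r : β → α} (hp : Tendsto p l (𝓝 q))
    (hr : ∀ i, range (p i) = range r) : range q ⊆ range r := by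
  rintro _ ⟨n, rfl⟩
  have hpn := tendsto_pi_nhds.1 hp n
  rw [nhds_discrete, tendsto_pure] at hpn
  obtain ⟨i, hi⟩ := hpn.exists
  rw [← hr i]
  exact ⟨n, hi⟩

theorem range_subset_of_forall_embedsRestr {I : Type} {A : I → Struc} {Γ : Struc → ℕ → ℕ}
    (hΓ : ContinuousOn Γ (LD A))
    (hinv : ∀ R ∈ LD A, ∀ R' ∈ LD A, Isom R R' → range (Γ R) = range (Γ R'))
    {D R : Struc} (hD : D ∈ LD A) (hR : R ∈ LD A) (hE : ∀ s, EmbedsRestr D s R) :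
    range (Γ D) ⊆ range (Γ R) := by
  choose R' hR'R hR'D using fun s => (hE s).exists_isom_restrEq
  have hR'A : ∀ s, R' s ∈ LD A := fun s => hR.imp fun _ => (hR'R s).trans
  have hR'lim : Tendsto R' atTop (𝓝[LD A] D) :=
    tendsto_nhdsWithin_iff.2 ⟨tendsto_of_restrEq hR'D, .of_forall hR'A⟩
  exact range_subset_of_tendsto ((hΓ D hD).tendsto.comp hR'lim) fun s =>
    hinv _ (hR'A s) _ hR (hR'R s)

/-- A countable family of pairwise nonisomorphic structures is `E_range`-learnable iff for
all `i ≠ j` some finite restriction of one of `A i`, `A j` fails to embed into the other. -/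
theorem erangeLearnable_iff_partialOrder {I : Type} [Countable I] (A : I → Struc)
    (hA : ∀ i j, i ≠ j → ¬ Isom (A i) (A j)) :
    (∃ Γ : Struc → (ℕ → ℕ), ContinuousOn Γ (LD A) ∧
        ∀ R ∈ LD A, ∀ R' ∈ LD A, (Isom R R' ↔ Erange (Γ R) (Γ R'))) ↔
      ∀ i j, i ≠ j →
        ∃ s, ¬ EmbedsRestr (A i) s (A j) ∨ ¬ EmbedsRestr (A j) s (A i) := by
  constructor
  · rintro ⟨Γ, hΓ, hiff⟩ i j hij
    by_contra! hE
    have hAi : A i ∈ LD A := ⟨i, .refl _⟩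
    have hAj : A j ∈ LD A := ⟨j, .refl _⟩
    have hinv := fun R hR R' hR' => (hiff R hR R' hR').1
    refine hA i j hij ((hiff _ hAi _ hAj).2 (Subset.antisymm ?_ ?_))
    · exact range_subset_of_forall_embedsRestr hΓ hinv hAi hAj fun s => (hE s).1
    · exact range_subset_of_forall_embedsRestr hΓ hinv hAj hAi fun s => (hE s).2
  · intro hsep
    obtain ⟨f, hf⟩ := Countable.exists_injective_nat I
    refine ⟨embedCodes A f, (continuous_embedCodes A f).continuousOn, ?_⟩
    rintro R ⟨i, hRi⟩ R' ⟨j, hR'j⟩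
    rw [Erange, range_embedCodes_eq_iff A hf]
    refine ⟨fun hRR' _ _ => hRR'.embedsRestr_iff _ _, fun hRR' => ?_⟩
    obtain rfl : i = j := by
      by_contra hij
      obtain ⟨s, hs | hs⟩ := hsep i j hij
      · exact hs (((hRR' i s).1 ((embedsRestr_self _ s).of_isom hRi.symm)).of_isom hR'j)
      · exact hs (((hRR' j s).2 ((embedsRestr_self _ s).of_isom hR'j.symm)).of_isom hRi)
    exact hRi.trans hR'j.symm
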